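/- arXiv:2303.00208 — 8 statements merged into one kernel-verified Lean document; each statement's English description precedes it below -/
import Mathlib

section
/- Let x : [pmin, p0] → ℝ be continuously differentiable with x(p0) = 0, let π̃(p0, ·) : [pmin, p0] → ℝ be continuous, and let f be a continuous strictly positive density on [pmin, pmax] with CDF F. Then ∫_{pmin}^{p0} ( ∫_{p0}^{p̂} s·x'(s) ds − π̃(p0, p̂)·x(p̂) )·f(p̂) dp̂ = ∫_{pmin}^{p0} (−x(s))·( π̃(p0, s) − s − F(s)/f(s) )·f(s) ds. -/
open intervalIntegral

/-- sell-side identity: for `x` continuously differentiable on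
`[pmin, p0]` with `x p0 = 0`, a continuous update rule `π̃ p0 ·` on `[pmin, p0]`,
and a continuous strictly positive density `f` on `[pmin, pmax]` with CDF
`F s = ∫ t in pmin..s, f t`,
`∫ phat in pmin..p0, ((∫ s in p0..phat, s * x' s) - π̃ phat * x phat) * f phat
  = ∫ s in pmin..p0, (-x s) * (π̃ s - s - F s / f s) * f s`. -/
theorem sell_side_virtual_welfare_identity
    (pmin pmax p0 : ℝ) (hpmin : 0 < pmin) (h1 : pmin < p0) (h2 : p0 < pmax)
    (f : ℝ → ℝ) (hf_cont : ContinuousOn f (Set.Icc pmin pmax))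
    (hf_pos : ∀ s ∈ Set.Icc pmin pmax, 0 < f s)
    (F : ℝ → ℝ) (hF : ∀ s, F s = ∫ t in pmin..s, f t)
    (πt : ℝ → ℝ) (hπt_cont : ContinuousOn πt (Set.Icc pmin p0))
    (x x' : ℝ → ℝ)
    (hderiv : ∀ s ∈ Set.Icc pmin p0, HasDerivAt x (x' s) s)
    (hcont : ContinuousOn x' (Set.Icc pmin p0))
    (hx0 : x p0 = 0) :
    ∫ phat in pmin..p0, ((∫ s in p0..phat, s * x' s) - πt phat * x phat) * f phat
      = ∫ s in pmin..p0, (-x s) * (πt s - s - F s / f s) * f s := by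
  have hle : pmin ≤ p0 := h1.le
  have hle2 : p0 ≤ pmax := h2.le
  have hIJ : Set.Icc pmin p0 ⊆ Set.Icc pmin pmax := Set.Icc_subset_Icc le_rfl hle2
  have huIcc : Set.uIcc pmin p0 = Set.Icc pmin p0 := Set.uIcc_of_le hle
  -- clamps
  set c : ℝ → ℝ := fun s => max pmin (min s pmax) with hc
  set c0 : ℝ → ℝ := fun s => max pmin (min s p0) with hc0
  have hc_cont : Continuous c := continuous_const.max (continuous_id.min continuous_const)
  have hc0_cont : Continuous c0 := continuous_const.max (continuous_id.min continuous_const)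
  have hc_maps : ∀ s, c s ∈ Set.Icc pmin pmax := fun s =>
    ⟨le_max_left _ _, max_le (hle.trans hle2) (min_le_right _ _)⟩
  have hc0_maps : ∀ s, c0 s ∈ Set.Icc pmin p0 := fun s =>
    ⟨le_max_left _ _, max_le hle (min_le_right _ _)⟩
  have hc_eq : ∀ s ∈ Set.Icc pmin pmax, c s = s := by
    intro s hs; simp [hc, min_eq_left hs.2, max_eq_right hs.1]
  have hc0_eq : ∀ s ∈ Set.Icc pmin p0, c0 s = s := by
    intro s hs; simp [hc0, min_eq_left hs.2, max_eq_right hs.1]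
  set fc : ℝ → ℝ := fun s => f (c s) with hfc
  set x'c : ℝ → ℝ := fun s => x' (c0 s) with hx'c
  have hfc_cont : Continuous fc := hf_cont.comp_continuous hc_cont hc_maps
  have hx'c_cont : Continuous x'c := hcont.comp_continuous hc0_cont hc0_maps
  have hfc_eq : ∀ s ∈ Set.Icc pmin pmax, fc s = f s := fun s hs => by
    simp only [hfc, hc_eq s hs]
  have hx'c_eq : ∀ s ∈ Set.Icc pmin p0, x'c s = x' s := fun s hs => by
    simp only [hx'c, hc0_eq s hs]
  -- Fc : extended CDF
  set Fc : ℝ → ℝ := fun s => ∫ t in pmin..s, fc t with hFcdef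
  have hFc_deriv : ∀ s, HasDerivAt Fc (fc s) s := fun s =>
    (hfc_cont.integral_hasStrictDerivAt pmin s).hasDerivAt
  have hFc_cont : Continuous Fc := by
    rw [continuous_iff_continuousAt]; exact fun s => (hFc_deriv s).continuousAt
  have hFc_eq : ∀ s ∈ Set.Icc pmin p0, F s = Fc s := by
    intro s hs
    rw [hF]
    apply intervalIntegral.integral_congr
    intro t ht
    have ht' : t ∈ Set.Icc pmin pmax := by
      rw [Set.uIcc_of_le hs.1] at ht
      exact ⟨ht.1, ht.2.trans (hs.2.trans hle2)⟩
    exact (hfc_eq t ht').symm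
  have hFc_pmin : Fc pmin = 0 := intervalIntegral.integral_same
  -- G : extended inner integral
  set G : ℝ → ℝ := fun phat => ∫ s in p0..phat, s * x'c s with hGdef
  have hG_deriv : ∀ s, HasDerivAt G (s * x'c s) s := fun s =>
    ((continuous_id.mul hx'c_cont).integral_hasStrictDerivAt p0 s).hasDerivAt
  have hG_cont : Continuous G := by
    rw [continuous_iff_continuousAt]; exact fun s => (hG_deriv s).continuousAt
  have hG_p0 : G p0 = 0 := intervalIntegral.integral_same
  have hG_eq : ∀ phat ∈ Set.Icc pmin p0, (∫ s in p0..phat, s * x' s) = G phat := by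
    intro phat hphat
    apply intervalIntegral.integral_congr
    intro t ht
    have ht' : t ∈ Set.Icc pmin p0 := by
      rcases Set.mem_uIcc.mp ht with h | h
      · exact ⟨hle.trans h.1, h.2.trans hphat.2⟩
      · exact ⟨hphat.1.trans h.1, h.2⟩
    simp only [hx'c_eq t ht']
  have hx_cont : ContinuousOn x (Set.Icc pmin p0) := fun s hs =>
    (hderiv s hs).continuousAt.continuousWithinAt
  -- Step B: ∫ (s x'c Fc + G fc) = 0
  have hB : (∫ s in pmin..p0, (s * x'c s * Fc s + G s * fc s)) = 0 := by
    have key : ∀ s ∈ Set.uIcc pmin p0, HasDerivAt (fun s => G s * Fc s)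
        (s * x'c s * Fc s + G s * fc s) s := fun s _ => (hG_deriv s).mul (hFc_deriv s)
    have hint : IntervalIntegrable (fun s => s * x'c s * Fc s + G s * fc s)
        MeasureTheory.volume pmin p0 :=
      (((continuous_id.mul hx'c_cont).mul hFc_cont).add (hG_cont.mul hfc_cont)).intervalIntegrable _ _
    rw [intervalIntegral.integral_eq_sub_of_hasDerivAt key hint, hG_p0, hFc_pmin]
    ring
  -- Step C: ∫ (x Fc + s x' Fc + s x fc) = 0
  have hC : (∫ s in pmin..p0, (x s * Fc s + s * x' s * Fc s + s * x s * fc s)) = 0 := by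
    have key : ∀ s ∈ Set.uIcc pmin p0, HasDerivAt (fun s => s * x s * Fc s)
        (x s * Fc s + s * x' s * Fc s + s * x s * fc s) s := by
      intro s hs
      rw [huIcc] at hs
      have h : HasDerivAt (fun s => s * x s * Fc s) ((1 * x s + s * x' s) * Fc s + (s * x s) * fc s) s :=
        ((hasDerivAt_id s).mul (hderiv s hs)).mul (hFc_deriv s)
      convert h using 1
      ring
    have hint : IntervalIntegrable
        (fun s => x s * Fc s + s * x' s * Fc s + s * x s * fc s) MeasureTheory.volume pmin p0 := by
      apply ContinuousOn.intervalIntegrable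
      rw [huIcc]
      exact ((hx_cont.mul hFc_cont.continuousOn).add
        ((continuousOn_id.mul hcont).mul hFc_cont.continuousOn)).add
        ((continuousOn_id.mul hx_cont).mul hfc_cont.continuousOn)
    rw [intervalIntegral.integral_eq_sub_of_hasDerivAt key hint, hx0, hFc_pmin]
    ring
  -- rewrite both sides
  have hL : (∫ phat in pmin..p0, ((∫ s in p0..phat, s * x' s) - πt phat * x phat) * f phat)
      = ∫ phat in pmin..p0, (G phat * fc phat - πt phat * x phat * fc phat) := by
    apply intervalIntegral.integral_congr
    intro t ht
    rw [huIcc] at ht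
    dsimp only
    rw [hG_eq t ht, ← hfc_eq t (hIJ ht)]
    ring
  have hR : (∫ s in pmin..p0, (-x s) * (πt s - s - F s / f s) * f s)
      = ∫ s in pmin..p0, (x s * s * fc s + x s * Fc s - x s * πt s * fc s) := by
    apply intervalIntegral.integral_congr
    intro t ht
    rw [huIcc] at ht
    have hfne : fc t ≠ 0 := by rw [hfc_eq t (hIJ ht)]; exact (hf_pos t (hIJ ht)).ne'
    dsimp only
    rw [hFc_eq t ht, ← hfc_eq t (hIJ ht)]
    field_simp
    ring
  rw [hL, hR]
  -- combine
  have hi1 : IntervalIntegrable (fun s => G s * fc s - πt s * x s * fc s)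
      MeasureTheory.volume pmin p0 := by
    apply ContinuousOn.intervalIntegrable
    rw [huIcc]
    exact (hG_cont.continuousOn.mul hfc_cont.continuousOn).sub
      ((hπt_cont.mul hx_cont).mul hfc_cont.continuousOn)
  have hi2 : IntervalIntegrable (fun s => x s * s * fc s + x s * Fc s - x s * πt s * fc s)
      MeasureTheory.volume pmin p0 := by
    apply ContinuousOn.intervalIntegrable
    rw [huIcc]
    exact (((hx_cont.mul continuousOn_id).mul hfc_cont.continuousOn).add
      (hx_cont.mul hFc_cont.continuousOn)).sub
      ((hx_cont.mul hπt_cont).mul hfc_cont.continuousOn)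
  have hi3 : IntervalIntegrable (fun s => s * x'c s * Fc s + G s * fc s)
      MeasureTheory.volume pmin p0 :=
    (((continuous_id.mul hx'c_cont).mul hFc_cont).add (hG_cont.mul hfc_cont)).intervalIntegrable pmin p0
  have hi4 : IntervalIntegrable (fun s => x s * Fc s + s * x' s * Fc s + s * x s * fc s)
      MeasureTheory.volume pmin p0 := by
    apply ContinuousOn.intervalIntegrable
    rw [huIcc]
    exact ((hx_cont.mul hFc_cont.continuousOn).add
      ((continuousOn_id.mul hcont).mul hFc_cont.continuousOn)).add
      ((continuousOn_id.mul hx_cont).mul hfc_cont.continuousOn)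
  have key : (∫ s in pmin..p0, (G s * fc s - πt s * x s * fc s))
      - (∫ s in pmin..p0, (x s * s * fc s + x s * Fc s - x s * πt s * fc s)) = 0 := by
    rw [← intervalIntegral.integral_sub hi1 hi2]
    have hcongr : ∀ t ∈ Set.uIcc pmin p0,
        (G t * fc t - πt t * x t * fc t) - (x t * t * fc t + x t * Fc t - x t * πt t * fc t)
        = (t * x'c t * Fc t + G t * fc t)
          - (x t * Fc t + t * x' t * Fc t + t * x t * fc t) := by
      intro t ht
      rw [huIcc] at ht
      rw [hx'c_eq t ht]
      ring
    rw [intervalIntegral.integral_congr hcongr, intervalIntegral.integral_sub hi3 hi4, hB, hC]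
    ring
  linarith [key]
end

section
/- Suppose the update rule π̃(p0, ·) is continuous on [pmin, pmax] and satisfies min(p0, p̂) ≤ π̃(p0, p̂) ≤ max(p0, p̂) for all p̂, and that f is a continuous strictly positive density on [pmin, pmax] with CDF F. Then the upper virtual value function φ_u(s) = s − (1−F(s))/f(s) − π̃(p0, s) has a root p1 ∈ [p0, pmax], and the lower virtual value function φ_l(s) = π̃(p0, s) − s − F(s)/f(s) has a root p2 ∈ [pmin, p0]. -/
/-- existence of roots: if the update rule `π̃ p0 ·` is continuous
on `[pmin, pmax]` and satisfies `min p0 phat ≤ π̃ phat ≤ max p0 phat` for all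
`phat ∈ [pmin, pmax]`, and `f` is a continuous strictly positive density on
`[pmin, pmax]` with CDF `F s = ∫ t in pmin..s, f t` (so `F pmax = 1`), then the
upper virtual value function `φ_u s = s - (1 - F s)/f s - π̃ s` has a root
`p1 ∈ [p0, pmax]`, and the lower virtual value function
`φ_l s = π̃ s - s - F s / f s` has a root `p2 ∈ [pmin, p0]`. -/
theorem virtual_value_roots_exist
    (pmin pmax p0 : ℝ) (hpmin : 0 < pmin) (h1 : pmin < p0) (h2 : p0 < pmax)
    (f : ℝ → ℝ) (hf_cont : ContinuousOn f (Set.Icc pmin pmax))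
    (hf_pos : ∀ s ∈ Set.Icc pmin pmax, 0 < f s)
    (F : ℝ → ℝ) (hF : ∀ s, F s = ∫ t in pmin..s, f t)
    (hF1 : F pmax = 1)
    (πt : ℝ → ℝ) (hπt_cont : ContinuousOn πt (Set.Icc pmin pmax))
    (hπt : ∀ phat ∈ Set.Icc pmin pmax,
      min p0 phat ≤ πt phat ∧ πt phat ≤ max p0 phat) :
    (∃ p1 ∈ Set.Icc p0 pmax, p1 - (1 - F p1) / f p1 - πt p1 = 0) ∧
    (∃ p2 ∈ Set.Icc pmin p0, πt p2 - p2 - F p2 / f p2 = 0) := by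
  have hp0mem : p0 ∈ Set.Icc pmin pmax := ⟨h1.le, h2.le⟩
  have hpminmem : pmin ∈ Set.Icc pmin pmax := ⟨le_refl _, (h1.trans h2).le⟩
  have hpmaxmem : pmax ∈ Set.Icc pmin pmax := ⟨(h1.trans h2).le, le_refl _⟩
  -- integrability
  have hint : MeasureTheory.IntegrableOn f (Set.Icc pmin pmax) :=
    hf_cont.integrableOn_Icc
  -- F is continuous on Icc pmin pmax
  have hFcont : ContinuousOn F (Set.Icc pmin pmax) := by
    have huIcc : Set.uIcc pmin pmax = Set.Icc pmin pmax :=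
      Set.uIcc_of_le (h1.trans h2).le
    have := intervalIntegral.continuousOn_primitive_interval (f := f)
      (a := pmin) (b := pmax) (μ := MeasureTheory.volume) (huIcc ▸ hint)
    rw [huIcc] at this
    exact this.congr (fun s _ => (hF s))
  -- F p0 computations
  have hint1 : IntervalIntegrable f MeasureTheory.volume pmin p0 :=
    ((Set.uIcc_of_le h1.le) ▸ (hint.mono_set (Set.Icc_subset_Icc le_rfl h2.le))).intervalIntegrable
  have hint2 : IntervalIntegrable f MeasureTheory.volume p0 pmax :=
    ((Set.uIcc_of_le h2.le) ▸ (hint.mono_set (Set.Icc_subset_Icc h1.le le_rfl))).intervalIntegrable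
  have hFp0_nonneg : 0 ≤ F p0 := by
    rw [hF]
    exact intervalIntegral.integral_nonneg h1.le
      (fun t ht => (hf_pos t ⟨ht.1, ht.2.trans h2.le⟩).le)
  have hFp0_le : F p0 ≤ 1 := by
    have hsplit : F p0 + ∫ t in p0..pmax, f t = F pmax := by
      rw [hF, hF]
      exact intervalIntegral.integral_add_adjacent_intervals hint1 hint2
    have h2' : 0 ≤ ∫ t in p0..pmax, f t :=
      intervalIntegral.integral_nonneg h2.le
        (fun t ht => (hf_pos t ⟨h1.le.trans ht.1, ht.2⟩).le)
    linarith [hF1 ▸ hsplit]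
  have hπtp0 : πt p0 = p0 := by
    have := hπt p0 hp0mem
    simp only [min_self, max_self] at this
    linarith [this.1, this.2]
  constructor
  · -- upper
    set g : ℝ → ℝ := fun s => s - (1 - F s) / f s - πt s with hg
    have hgcont : ContinuousOn g (Set.Icc p0 pmax) := by
      have hsub : Set.Icc p0 pmax ⊆ Set.Icc pmin pmax :=
        Set.Icc_subset_Icc h1.le le_rfl
      apply ContinuousOn.sub
      apply ContinuousOn.sub (continuousOn_id)
      · exact ((continuousOn_const.sub (hFcont.mono hsub)).div
          (hf_cont.mono hsub) (fun s hs => (hf_pos s (hsub hs)).ne'))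
      · exact hπt_cont.mono hsub
    have hgp0 : g p0 ≤ 0 := by
      have : g p0 = -((1 - F p0) / f p0) := by simp only [hg]; rw [hπtp0]; ring
      rw [this]
      apply neg_nonpos_of_nonneg
      exact div_nonneg (by linarith) (hf_pos p0 hp0mem).le
    have hgpmax : 0 ≤ g pmax := by
      have hπmax : πt pmax ≤ pmax := by
        have := (hπt pmax hpmaxmem).2
        rwa [max_eq_right h2.le] at this
      simp only [hg, hF1]
      have : (1 - (1:ℝ)) / f pmax = 0 := by norm_num
      simp [hF1]
      linarith
    have := intermediate_value_Icc (le_of_lt h2) hgcont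
    have h0 : (0:ℝ) ∈ Set.Icc (g p0) (g pmax) := ⟨hgp0, hgpmax⟩
    obtain ⟨p1, hp1mem, hp1⟩ := this h0
    exact ⟨p1, hp1mem, hp1⟩
  · -- lower
    set g : ℝ → ℝ := fun s => πt s - s - F s / f s with hg
    have hsub : Set.Icc pmin p0 ⊆ Set.Icc pmin pmax :=
      Set.Icc_subset_Icc le_rfl h2.le
    have hgcont : ContinuousOn g (Set.Icc pmin p0) := by
      apply ContinuousOn.sub
      apply ContinuousOn.sub (hπt_cont.mono hsub) (continuousOn_id)
      exact ((hFcont.mono hsub).div (hf_cont.mono hsub)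
        (fun s hs => (hf_pos s (hsub hs)).ne'))
    have hFpmin : F pmin = 0 := by simp [hF]
    have hgpmin : 0 ≤ g pmin := by
      have hπmin : pmin ≤ πt pmin := by
        have := (hπt pmin hpminmem).1
        rwa [min_eq_right h1.le] at this
      simp only [hg, hFpmin]
      simp [hFpmin]
      linarith
    have hgp0 : g p0 ≤ 0 := by
      have : g p0 = -(F p0 / f p0) := by simp only [hg]; rw [hπtp0]; ring
      rw [this]
      exact neg_nonpos_of_nonneg (div_nonneg hFp0_nonneg (hf_pos p0 hp0mem).le)
    have := intermediate_value_Icc' (le_of_lt h1) hgcont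
    have h0 : (0:ℝ) ∈ Set.Icc (g p0) (g pmin) := ⟨hgp0, hgpmin⟩
    obtain ⟨p2, hp2mem, hp2⟩ := this h0
    exact ⟨p2, hp2mem, hp2⟩
end

section
/- Suppose φ_u : [p0, pmax] → ℝ is nondecreasing with root p1 ∈ [p0, pmax] and φ_l : [pmin, p0] → ℝ is nonincreasing with root p2 ∈ [pmin, p0], and f is a nonnegative integrable function on [pmin, pmax]. Define the bang-bang allocation rule x⋆(p̂) = 1 for p1 ≤ p̂ ≤ pmax, x⋆(p̂) = 0 for p2 < p̂ < p1, and x⋆(p̂) = −1 for pmin ≤ p̂ ≤ p2. Then for every measurable allocation rule x : [pmin, pmax] → [−1, 1] with x ≥ 0 on [p0, pmax] and x ≤ 0 on [pmin, p0], the expected virtual welfare satisfies ∫_{p0}^{pmax} x(s)·φ_u(s)·f(s) ds + ∫_{pmin}^{p0} (−x(s))·φ_l(s)·f(s) ds ≤ ∫_{p0}^{pmax} x⋆(s)·φ_u(s)·f(s) ds + ∫_{pmin}^{p0} (−x⋆(s))·φ_l(s)·f(s) ds; i.e., x⋆ maximizes expected virtual welfare, hence expected profit, among all incentive-compatible unit-demand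 allocation rules. -/
open MeasureTheory Set

lemma integrable_bdd_mul (a b C : ℝ) (hab : a ≤ b) (x φ f : ℝ → ℝ)
    (hx : AEMeasurable x (volume.restrict (Set.Ioc a b)))
    (hxb : ∀ s ∈ Set.Icc a b, |x s| ≤ 1)
    (hφ : AEMeasurable φ (volume.restrict (Set.Ioc a b)))
    (hφb : ∀ s ∈ Set.Icc a b, |φ s| ≤ C)
    (hf : IntervalIntegrable f volume a b) :
    IntervalIntegrable (fun s => x s * φ s * f s) volume a b := by
  rw [intervalIntegrable_iff_integrableOn_Ioc_of_le hab] at hf ⊢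
  refine ((hf.norm.const_mul C).mono'
    (((hx.mul hφ).mul hf.1.aemeasurable).aestronglyMeasurable) ?_)
  rw [ae_restrict_iff' measurableSet_Ioc]
  refine Filter.Eventually.of_forall fun s hs => ?_
  have hs' : s ∈ Set.Icc a b := Set.Ioc_subset_Icc_self hs
  have h1 := hxb s hs'
  have h2 := hφb s hs'
  have hC : (0:ℝ) ≤ C := (abs_nonneg _).trans h2
  simp only [Real.norm_eq_abs, abs_mul]
  calc |x s| * |φ s| * |f s| ≤ 1 * C * |f s| := by gcongr <;> exact abs_nonneg _
    _ = C * |f s| := by ring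

/-- optimality of the bang-bang allocation rule: if `φ_u` is
nondecreasing on `[p0, pmax]` with root `p1 ∈ [p0, pmax]`, `φ_l` is nonincreasing
on `[pmin, p0]` with root `p2 ∈ [pmin, p0]`, and `f` is nonnegative and
integrable on `[pmin, pmax]`, then the bang-bang allocation rule
`x⋆ phat = 1` for `p1 ≤ phat`, `x⋆ phat = -1` for `phat ≤ p2`, and `0` in
between, maximizes expected virtual welfare among all measurable allocation
rules `x : [pmin, pmax] → [-1, 1]` with `x ≥ 0` on `[p0, pmax]` and `x ≤ 0` on
`[pmin, p0]`. -/
theorem bang_bang_allocation_optimal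
    (pmin pmax p0 p1 p2 : ℝ) (hpmin : 0 < pmin) (h1 : pmin < p0) (h2 : p0 < pmax)
    (hp1 : p1 ∈ Set.Icc p0 pmax) (hp2 : p2 ∈ Set.Icc pmin p0)
    (φu : ℝ → ℝ) (hφu_mono : MonotoneOn φu (Set.Icc p0 pmax))
    (hroot1 : φu p1 = 0)
    (φl : ℝ → ℝ) (hφl_anti : AntitoneOn φl (Set.Icc pmin p0))
    (hroot2 : φl p2 = 0)
    (f : ℝ → ℝ) (hf_nonneg : ∀ s ∈ Set.Icc pmin pmax, 0 ≤ f s)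
    (hf_int : IntervalIntegrable f MeasureTheory.volume pmin pmax)
    (xstar : ℝ → ℝ)
    (hxstar : ∀ phat, xstar phat =
      if p1 ≤ phat then (1 : ℝ) else if phat ≤ p2 then (-1 : ℝ) else 0)
    (x : ℝ → ℝ) (hx_meas : Measurable x)
    (hx_range : ∀ s ∈ Set.Icc pmin pmax, x s ∈ Set.Icc (-1 : ℝ) 1)
    (hx_up : ∀ s ∈ Set.Icc p0 pmax, 0 ≤ x s)
    (hx_lo : ∀ s ∈ Set.Icc pmin p0, x s ≤ 0) :
    (∫ s in p0..pmax, x s * φu s * f s)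
        + (∫ s in pmin..p0, (-x s) * φl s * f s)
      ≤ (∫ s in p0..pmax, xstar s * φu s * f s)
        + ∫ s in pmin..p0, (-xstar s) * φl s * f s := by
  -- basic inclusions
  have hUsub : Set.Icc p0 pmax ⊆ Set.Icc pmin pmax := Set.Icc_subset_Icc h1.le le_rfl
  have hLsub : Set.Icc pmin p0 ⊆ Set.Icc pmin pmax := Set.Icc_subset_Icc le_rfl h2.le
  -- f integrable on subintervals
  have hfU : IntervalIntegrable f volume p0 pmax :=
    hf_int.mono_set (by rw [Set.uIcc_of_le h2.le, Set.uIcc_of_le (h1.trans h2).le]; exact hUsub)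
  have hfL : IntervalIntegrable f volume pmin p0 :=
    hf_int.mono_set (by rw [Set.uIcc_of_le h1.le, Set.uIcc_of_le (h1.trans h2).le]; exact hLsub)
  -- xstar is measurable and bounded
  have hxstar_eq : xstar = fun phat =>
      if p1 ≤ phat then (1 : ℝ) else if phat ≤ p2 then (-1 : ℝ) else 0 := funext hxstar
  have hXm : Measurable xstar := by
    rw [hxstar_eq]
    exact Measurable.ite (measurableSet_le measurable_const measurable_id) measurable_const
      (Measurable.ite (measurableSet_le measurable_id measurable_const)
        measurable_const measurable_const)
  have hXb : ∀ s, |xstar s| ≤ 1 := by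
    intro s; rw [hxstar s]; split_ifs <;> norm_num
  -- bounds on φu, φl
  set Cu : ℝ := |φu p0| + |φu pmax| with hCu
  have hφub : ∀ s ∈ Set.Icc p0 pmax, |φu s| ≤ Cu := by
    intro s hs
    have hl : φu p0 ≤ φu s := hφu_mono (Set.left_mem_Icc.mpr h2.le) hs hs.1
    have hr : φu s ≤ φu pmax := hφu_mono hs (Set.right_mem_Icc.mpr h2.le) hs.2
    have := abs_nonneg (φu p0); have := abs_nonneg (φu pmax)
    have h3 := neg_abs_le (φu p0); have h4 := le_abs_self (φu pmax)
    rw [abs_le]; constructor <;> [linarith; linarith]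
  set Cl : ℝ := |φl pmin| + |φl p0| with hCl
  have hφlb : ∀ s ∈ Set.Icc pmin p0, |φl s| ≤ Cl := by
    intro s hs
    have hl : φl p0 ≤ φl s := hφl_anti hs (Set.right_mem_Icc.mpr h1.le) hs.2
    have hr : φl s ≤ φl pmin := hφl_anti (Set.left_mem_Icc.mpr h1.le) hs hs.1
    have := abs_nonneg (φl pmin); have := abs_nonneg (φl p0)
    have h3 := neg_abs_le (φl p0); have h4 := le_abs_self (φl pmin)
    rw [abs_le]; constructor <;> [linarith; linarith]
  -- aemeasurability of φu, φl on restricted measures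
  have hφuM : AEMeasurable φu (volume.restrict (Set.Ioc p0 pmax)) := by
    have := aemeasurable_restrict_of_monotoneOn (μ := volume) measurableSet_Icc hφu_mono
    exact this.mono_measure (Measure.restrict_mono Set.Ioc_subset_Icc_self le_rfl)
  have hφlM : AEMeasurable φl (volume.restrict (Set.Ioc pmin p0)) := by
    have := aemeasurable_restrict_of_antitoneOn (μ := volume) measurableSet_Icc hφl_anti
    exact this.mono_measure (Measure.restrict_mono Set.Ioc_subset_Icc_self le_rfl)
  -- bound on x
  have hxb : ∀ s ∈ Set.Icc pmin pmax, |x s| ≤ 1 := by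
    intro s hs
    have := hx_range s hs
    rw [abs_le]; exact ⟨this.1, this.2⟩
  -- integrability of the four integrands
  have intU1 : IntervalIntegrable (fun s => x s * φu s * f s) volume p0 pmax :=
    integrable_bdd_mul _ _ Cu h2.le _ _ _ hx_meas.aemeasurable
      (fun s hs => hxb s (hUsub hs)) hφuM hφub hfU
  have intU2 : IntervalIntegrable (fun s => xstar s * φu s * f s) volume p0 pmax :=
    integrable_bdd_mul _ _ Cu h2.le _ _ _ hXm.aemeasurable
      (fun s _ => hXb s) hφuM hφub hfU
  have intL1 : IntervalIntegrable (fun s => (-x s) * φl s * f s) volume pmin p0 :=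
    integrable_bdd_mul _ _ Cl h1.le _ _ _ hx_meas.neg.aemeasurable
      (fun s hs => by rw [abs_neg]; exact hxb s (hLsub hs)) hφlM hφlb hfL
  have intL2 : IntervalIntegrable (fun s => (-xstar s) * φl s * f s) volume pmin p0 :=
    integrable_bdd_mul _ _ Cl h1.le _ _ _ hXm.neg.aemeasurable
      (fun s _ => by rw [abs_neg]; exact hXb s) hφlM hφlb hfL
  -- pointwise inequality on the upper interval
  have hptU : ∀ s ∈ Set.Icc p0 pmax, x s * φu s * f s ≤ xstar s * φu s * f s := by
    intro s hs
    have hfs : 0 ≤ f s := hf_nonneg s (hUsub hs)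
    have hxs0 : 0 ≤ x s := hx_up s hs
    have hxs1 : x s ≤ 1 := (hx_range s (hUsub hs)).2
    rw [hxstar s]
    by_cases hp : p1 ≤ s
    · rw [if_pos hp]
      have hφ : 0 ≤ φu s := hroot1 ▸ hφu_mono hp1 hs hp
      nlinarith [mul_nonneg (sub_nonneg.mpr hxs1) (mul_nonneg hφ hfs)]
    · rw [if_neg hp]
      have hφ : φu s ≤ 0 := hroot1 ▸ hφu_mono hs hp1 (le_of_not_ge hp)
      have hlhs : x s * φu s * f s ≤ 0 :=
        mul_nonpos_of_nonpos_of_nonneg (mul_nonpos_of_nonneg_of_nonpos hxs0 hφ) hfs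
      by_cases hq : s ≤ p2
      · rw [if_pos hq]
        nlinarith
      · rw [if_neg hq]
        simpa using hlhs
  -- pointwise inequality on the lower interval
  have hptL : ∀ s ∈ Set.Icc pmin p0, (-x s) * φl s * f s ≤ (-xstar s) * φl s * f s := by
    intro s hs
    have hfs : 0 ≤ f s := hf_nonneg s (hLsub hs)
    have hxs0 : 0 ≤ -x s := neg_nonneg.mpr (hx_lo s hs)
    have hxs1 : -x s ≤ 1 := neg_le.mpr (hx_range s (hLsub hs)).1
    rw [hxstar s]
    by_cases hp : p1 ≤ s
    · rw [if_pos hp]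
      -- here s = p0 = p1, and φl s ≤ 0
      have hφ : φl s ≤ 0 := hroot2 ▸ hφl_anti hp2 hs (hp2.2.trans (hp1.1.trans hp))
      nlinarith [mul_nonneg (neg_nonneg.mpr hφ) hfs,
        mul_nonpos_of_nonpos_of_nonneg (mul_nonpos_of_nonneg_of_nonpos hxs0 hφ) hfs]
    · rw [if_neg hp]
      by_cases hq : s ≤ p2
      · rw [if_pos hq]
        have hφ : 0 ≤ φl s := hroot2 ▸ hφl_anti hs hp2 hq
        nlinarith [mul_nonneg (sub_nonneg.mpr hxs1) (mul_nonneg hφ hfs)]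
      · rw [if_neg hq]
        have hφ : φl s ≤ 0 := hroot2 ▸ hφl_anti hp2 hs (le_of_not_ge hq)
        have : (-x s) * φl s * f s ≤ 0 :=
          mul_nonpos_of_nonpos_of_nonneg (mul_nonpos_of_nonneg_of_nonpos hxs0 hφ) hfs
        simpa using this
  have IU := intervalIntegral.integral_mono_on h2.le intU1 intU2 hptU
  have IL := intervalIntegral.integral_mono_on h1.le intL1 intL2 hptL
  linarith
end

section
/- (No-trade theorem under perfect information.) Suppose the update rule is π̃(p0, p̂) = p̂ for all p̂ ∈ [pmin, pmax], so that φ_u(s) = −(1−F(s))/f(s) and φ_l(s) = −F(s)/f(s). Then for every distribution D with continuous strictly positive density f on [pmin, pmax], and every measurable allocation rule x : [pmin, pmax] → [−1, 1] with x ≥ 0 on [p0, pmax] and x ≤ 0 on [pmin, p0], the expected virtual welfare ∫_{p0}^{pmax} x(s)·φ_u(s)·f(s) ds + ∫_{pmin}^{p0} (−x(s))·φ_l(s)·f(s) ds is at most 0, and the value 0 is attained by the allocation rule x ≡ 0. Hence the profit-maximizing allocation rule is x⋆(p̂) = 0 for all p̂. -/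
/-- no-trade theorem under perfect information: if the update
rule is `π̃ p0 phat = phat` (pure adverse selection), so that the virtual value
functions are `φ_u s = -(1 - F s)/f s` and `φ_l s = -(F s)/f s`, then for every
distribution with continuous strictly positive density `f` on `[pmin, pmax]`
(with CDF `F s = ∫ t in pmin..s, f t`) and every measurable allocation rule
`x : [pmin, pmax] → [-1, 1]` with `x ≥ 0` on `[p0, pmax]` and `x ≤ 0` on
`[pmin, p0]`, the expected virtual welfare is at most `0`, and the value `0` is
attained by the allocation rule `x ≡ 0`. -/
theorem no_trade_theorem_perfect_information
    (pmin pmax p0 : ℝ) (hpmin : 0 < pmin) (h1 : pmin < p0) (h2 : p0 < pmax)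
    (f : ℝ → ℝ) (hf_cont : ContinuousOn f (Set.Icc pmin pmax))
    (hf_pos : ∀ s ∈ Set.Icc pmin pmax, 0 < f s)
    (F : ℝ → ℝ) (hF : ∀ s, F s = ∫ t in pmin..s, f t)
    (hF1 : F pmax = 1)
    (φu φl : ℝ → ℝ)
    (hφu : ∀ s, φu s = -((1 - F s) / f s))
    (hφl : ∀ s, φl s = -(F s / f s))
    (x : ℝ → ℝ) (hx_meas : Measurable x)
    (hx_range : ∀ s ∈ Set.Icc pmin pmax, x s ∈ Set.Icc (-1 : ℝ) 1)
    (hx_up : ∀ s ∈ Set.Icc p0 pmax, 0 ≤ x s)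
    (hx_lo : ∀ s ∈ Set.Icc pmin p0, x s ≤ 0) :
    ((∫ s in p0..pmax, x s * φu s * f s)
        + (∫ s in pmin..p0, (-x s) * φl s * f s) ≤ 0) ∧
    ((∫ s in p0..pmax, (0 : ℝ) * φu s * f s)
        + (∫ s in pmin..p0, (-(0 : ℝ)) * φl s * f s) = 0) := by
  have hfint : ∀ a b : ℝ, Set.uIcc a b ⊆ Set.Icc pmin pmax →
      IntervalIntegrable f MeasureTheory.volume a b := fun a b h =>
    (hf_cont.mono h).intervalIntegrable
  -- F is nonneg and ≤ 1 on [pmin, pmax]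
  have hF0 : ∀ s ∈ Set.Icc pmin pmax, 0 ≤ F s := by
    intro s hs
    rw [hF s]
    exact intervalIntegral.integral_nonneg hs.1
      (fun u hu => (hf_pos u ⟨hu.1, hu.2.trans hs.2⟩).le)
  have hFle : ∀ s ∈ Set.Icc pmin pmax, F s ≤ 1 := by
    intro s hs
    have hadd : (∫ t in pmin..s, f t) + (∫ t in s..pmax, f t)
        = ∫ t in pmin..pmax, f t := by
      apply intervalIntegral.integral_add_adjacent_intervals
      · exact hfint _ _ (by rw [Set.uIcc_of_le hs.1]; exact Set.Icc_subset_Icc le_rfl hs.2)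
      · exact hfint _ _ (by rw [Set.uIcc_of_le hs.2]; exact Set.Icc_subset_Icc hs.1 le_rfl)
    have htail : 0 ≤ ∫ t in s..pmax, f t :=
      intervalIntegral.integral_nonneg hs.2
        (fun u hu => (hf_pos u ⟨hs.1.trans hu.1, hu.2⟩).le)
    have : F s ≤ F pmax := by
      rw [hF s, hF pmax, ← hadd]; linarith
    linarith [this, hF1]
  constructor
  · -- rewrite the integrands
    have e1 : ∀ s ∈ Set.uIcc p0 pmax, x s * φu s * f s = x s * (F s - 1) := by
      intro s hs
      rw [Set.uIcc_of_le h2.le] at hs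
      have hs' : s ∈ Set.Icc pmin pmax := ⟨h1.le.trans hs.1, hs.2⟩
      have hfne : f s ≠ 0 := (hf_pos s hs').ne'
      rw [hφu s]
      field_simp
      ring
    have e2 : ∀ s ∈ Set.uIcc pmin p0, (-x s) * φl s * f s = x s * F s := by
      intro s hs
      rw [Set.uIcc_of_le h1.le] at hs
      have hs' : s ∈ Set.Icc pmin pmax := ⟨hs.1, hs.2.trans h2.le⟩
      have hfne : f s ≠ 0 := (hf_pos s hs').ne'
      rw [hφl s]
      field_simp
    rw [intervalIntegral.integral_congr e1, intervalIntegral.integral_congr e2]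
    have b1 : (∫ s in p0..pmax, x s * (F s - 1)) ≤ 0 := by
      have : 0 ≤ ∫ s in p0..pmax, -(x s * (F s - 1)) := by
        apply intervalIntegral.integral_nonneg h2.le
        intro u hu
        have hu' : u ∈ Set.Icc pmin pmax := ⟨h1.le.trans hu.1, hu.2⟩
        have := hx_up u hu
        have := hFle u hu'
        nlinarith
      rw [intervalIntegral.integral_neg] at this
      linarith
    have b2 : (∫ s in pmin..p0, x s * F s) ≤ 0 := by
      have : 0 ≤ ∫ s in pmin..p0, -(x s * F s) := by
        apply intervalIntegral.integral_nonneg h1.le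
        intro u hu
        have hu' : u ∈ Set.Icc pmin pmax := ⟨hu.1, hu.2.trans h2.le⟩
        have := hx_lo u hu
        have := hF0 u hu'
        nlinarith
      rw [intervalIntegral.integral_neg] at this
      linarith
    linarith
  · simp
end

section
/- Let 0 ≤ λ1 ≤ λ2 ≤ 1 and define, for each λ ∈ [0,1], the upper virtual value function φ_u(s; λ) = λ·(s − p0) − (1−F(s))/f(s) on [p0, pmax]. Suppose φ_u(·; λ1) is strictly increasing on [p0, pmax], and let p1 ∈ [p0, pmax] satisfy φ_u(p1; λ1) = 0 and q1 ∈ [p0, pmax] satisfy φ_u(q1; λ2) = 0. Then q1 ≤ p1: as λ increases (more noise trading, less adverse selection), the upper threshold of the no-trade gap moves down toward p0. -/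
/-- upper threshold moves down as λ increases: with the linear
update rule, the upper virtual value function is
`φ_u(s; λ) = λ * (s - p0) - (1 - F s)/f s` on `[p0, pmax]`. If `0 ≤ λ1 ≤ λ2 ≤ 1`,
`φ_u(·; λ1)` is strictly increasing on `[p0, pmax]`, and `p1, q1 ∈ Set.Icc p0 pmax`
are roots of `φ_u(·; λ1)` and `φ_u(·; λ2)` respectively, then `q1 ≤ p1`. -/
theorem upper_threshold_antitone_in_lambda
    (pmin pmax p0 : ℝ) (hpmin : 0 < pmin) (h1 : pmin < p0) (h2 : p0 < pmax)
    (f F : ℝ → ℝ)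
    (φu : ℝ → ℝ → ℝ)
    (hφu : ∀ lam s, φu lam s = lam * (s - p0) - (1 - F s) / f s)
    (lam1 lam2 : ℝ) (hlam1 : 0 ≤ lam1) (hlam12 : lam1 ≤ lam2) (hlam2 : lam2 ≤ 1)
    (hmono : StrictMonoOn (φu lam1) (Set.Icc p0 pmax))
    (p1 q1 : ℝ) (hp1 : p1 ∈ Set.Icc p0 pmax) (hq1 : q1 ∈ Set.Icc p0 pmax)
    (hroot1 : φu lam1 p1 = 0) (hroot2 : φu lam2 q1 = 0) :
    q1 ≤ p1 := by
  by_contra h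
  push_neg at h
  have hle : φu lam1 q1 ≤ 0 := by
    have : φu lam1 q1 = φu lam2 q1 - (lam2 - lam1) * (q1 - p0) := by
      rw [hφu, hφu]; ring
    rw [this, hroot2]
    have : 0 ≤ (lam2 - lam1) * (q1 - p0) :=
      mul_nonneg (by linarith) (by linarith [hq1.1])
    linarith
  have := hmono hp1 hq1 h
  rw [hroot1] at this
  linarith
end

section
/- Let 0 ≤ λ1 ≤ λ2 ≤ 1 and define, for each λ ∈ [0,1], the lower virtual value function φ_l(s; λ) = λ·(p0 − s) − F(s)/f(s) on [pmin, p0]. Suppose φ_l(·; λ1) is strictly decreasing on [pmin, p0], and let p2 ∈ [pmin, p0] satisfy φ_l(p2; λ1) = 0 and q2 ∈ [pmin, p0] satisfy φ_l(q2; λ2) = 0. Then q2 ≥ p2: as λ increases (more noise trading, less adverse selection), the lower threshold of the no-trade gap moves up toward p0. -/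
/-- lower threshold moves up as λ increases: with the linear
update rule, the lower virtual value function is
`φ_l(s; λ) = λ * (p0 - s) - (F s)/f s` on `[pmin, p0]`. If `0 ≤ λ1 ≤ λ2 ≤ 1`,
`φ_l(·; λ1)` is strictly decreasing on `[pmin, p0]`, and `p2, q2 ∈ [pmin, p0]`
are roots of `φ_l(·; λ1)` and `φ_l(·; λ2)` respectively, then `q2 ≥ p2`. -/
theorem lower_threshold_monotone_in_lambda
    (pmin pmax p0 : ℝ) (hpmin : 0 < pmin) (h1 : pmin < p0) (h2 : p0 < pmax)
    (f F : ℝ → ℝ)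
    (φl : ℝ → ℝ → ℝ)
    (hφl : ∀ lam s, φl lam s = lam * (p0 - s) - F s / f s)
    (lam1 lam2 : ℝ) (hlam1 : 0 ≤ lam1) (hlam12 : lam1 ≤ lam2) (hlam2 : lam2 ≤ 1)
    (hanti : StrictAntiOn (φl lam1) (Set.Icc pmin p0))
    (p2 q2 : ℝ) (hp2 : p2 ∈ Set.Icc pmin p0) (hq2 : q2 ∈ Set.Icc pmin p0)
    (hroot1 : φl lam1 p2 = 0) (hroot2 : φl lam2 q2 = 0) :
    p2 ≤ q2 := by
  by_contra h
  push_neg at h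
  have h1q : φl lam1 q2 > 0 := by
    have := hanti hq2 hp2 h
    rwa [hroot1] at this
  have hge : φl lam2 q2 ≥ φl lam1 q2 := by
    rw [hφl, hφl]
    have : lam1 * (p0 - q2) ≤ lam2 * (p0 - q2) :=
      mul_le_mul_of_nonneg_right hlam12 (by linarith [hq2.2])
    linarith
  linarith
end

section
/- (Length of the no-trade gap is decreasing in λ.) Let 0 ≤ λ1 ≤ λ2 ≤ 1 and define φ_u(s; λ) = λ(s − p0) − (1−F(s))/f(s) on [p0, pmax] and φ_l(s; λ) = λ(p0 − s) − F(s)/f(s) on [pmin, p0]. Suppose φ_u(·; λ1) is strictly increasing and φ_l(·; λ1) is strictly decreasing, and suppose p1, q1 ∈ [p0, pmax] and p2, q2 ∈ [pmin, p0] satisfy φ_u(p1; λ1) = 0, φ_u(q1; λ2) = 0, φ_l(p2; λ1) = 0, φ_l(q2; λ2) = 0. Then the no-trade gap lengths satisfy q1 − q2 ≤ p1 − p2. -/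
/-- length of the no-trade gap is decreasing in λ: with the
linear-update virtual value functions `φ_u(s; λ) = λ(s - p0) - (1 - F s)/f s`
on `[p0, pmax]` and `φ_l(s; λ) = λ(p0 - s) - (F s)/f s` on `[pmin, p0]`, if
`0 ≤ λ1 ≤ λ2 ≤ 1`, `φ_u(·; λ1)` is strictly increasing, `φ_l(·; λ1)` is
strictly decreasing, and `p1, q1 ∈ [p0, pmax]`, `p2, q2 ∈ [pmin, p0]` are roots
of `φ_u(·; λ1)`, `φ_u(·; λ2)`, `φ_l(·; λ1)`, `φ_l(·; λ2)` respectively, then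
the no-trade gap lengths satisfy `q1 - q2 ≤ p1 - p2`. -/
theorem no_trade_gap_length_decreasing_in_lambda
    (pmin pmax p0 : ℝ) (hpmin : 0 < pmin) (h1 : pmin < p0) (h2 : p0 < pmax)
    (f F : ℝ → ℝ)
    (φu φl : ℝ → ℝ → ℝ)
    (hφu : ∀ lam s, φu lam s = lam * (s - p0) - (1 - F s) / f s)
    (hφl : ∀ lam s, φl lam s = lam * (p0 - s) - F s / f s)
    (lam1 lam2 : ℝ) (hlam1 : 0 ≤ lam1) (hlam12 : lam1 ≤ lam2) (hlam2 : lam2 ≤ 1)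
    (hmono : StrictMonoOn (φu lam1) (Set.Icc p0 pmax))
    (hanti : StrictAntiOn (φl lam1) (Set.Icc pmin p0))
    (p1 q1 : ℝ) (hp1 : p1 ∈ Set.Icc p0 pmax) (hq1 : q1 ∈ Set.Icc p0 pmax)
    (p2 q2 : ℝ) (hp2 : p2 ∈ Set.Icc pmin p0) (hq2 : q2 ∈ Set.Icc pmin p0)
    (hroot_u1 : φu lam1 p1 = 0) (hroot_u2 : φu lam2 q1 = 0)
    (hroot_l1 : φl lam1 p2 = 0) (hroot_l2 : φl lam2 q2 = 0) :
    q1 - q2 ≤ p1 - p2 := by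
  have hu : φu lam1 q1 ≤ φu lam1 p1 := by
    rw [hroot_u1]
    have h := hroot_u2
    rw [hφu] at h ⊢
    nlinarith [hq1.1, hlam12]
  have hl : φl lam1 q2 ≤ φl lam1 p2 := by
    rw [hroot_l1]
    have h := hroot_l2
    rw [hφl] at h ⊢
    nlinarith [hq2.2, hlam12]
  have hq1p1 : q1 ≤ p1 := by
    by_contra hlt
    push_neg at hlt
    exact absurd (hmono hp1 hq1 hlt) (not_lt.2 hu)
  have hp2q2 : p2 ≤ q2 := by
    by_contra hlt
    push_neg at hlt
    exact absurd (hanti hq2 hp2 hlt) (not_lt.2 hl)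
  linarith
end

section
/- (Uniswap v2 payment rule is the Myerson payment.) Let c > 0 and let g(p) = c/√p for p > 0 be the constant-product market maker's demand curve. Then for all 0 < p0 ≤ p̂ (and likewise for all positive p0, p̂), the Myerson payment −∫_{p0}^{p̂} p·g'(p) dp equals c·(√p̂ − √p0). -/
lemma uniswap_deriv (c : ℝ) {x : ℝ} (hx : 0 < x) :
    deriv (fun q => c / Real.sqrt q) x = -c / (2 * x * Real.sqrt x) := by
  have hs : Real.sqrt x ≠ 0 := ne_of_gt (Real.sqrt_pos.2 hx)
  have h : HasDerivAt (fun q => c / Real.sqrt q)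
      ((0 * Real.sqrt x - c * (1 / (2 * Real.sqrt x))) / (Real.sqrt x) ^ 2) x :=
    (hasDerivAt_const x c).div (Real.hasDerivAt_sqrt (ne_of_gt hx)) hs
  rw [h.deriv, Real.sq_sqrt hx.le]
  field_simp
  ring

/-- Uniswap v2 payment rule is the Myerson payment: for the
constant-product demand curve `g p = c / √p` with `c > 0`, the Myerson payment
`-∫ p in p0..phat, p * g' p` equals `c * (√phat - √p0)` for all positive
`p0, phat`. -/
theorem uniswap_v2_myerson_payment
    (c : ℝ) (hc : 0 < c) :
    ∀ p0 phat : ℝ, 0 < p0 → 0 < phat →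
      -(∫ p in p0..phat, p * deriv (fun q => c / Real.sqrt q) p)
        = c * (Real.sqrt phat - Real.sqrt p0) := by
  intro p0 phat h0 h1
  have hpos : ∀ x ∈ Set.uIcc p0 phat, 0 < x := fun x hx =>
    lt_of_lt_of_le (lt_min h0 h1) hx.1
  have hcongr : ∫ p in p0..phat, p * deriv (fun q => c / Real.sqrt q) p
      = ∫ p in p0..phat, -(c / (2 * Real.sqrt p)) := by
    apply intervalIntegral.integral_congr
    intro x hx
    have hx0 := hpos x hx
    have hs : Real.sqrt x ≠ 0 := ne_of_gt (Real.sqrt_pos.2 hx0)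
    dsimp only
    rw [uniswap_deriv c hx0]
    field_simp
  rw [hcongr]
  have key : ∫ p in p0..phat, -(c / (2 * Real.sqrt p))
      = (fun x => -(c * Real.sqrt x)) phat - (fun x => -(c * Real.sqrt x)) p0 := by
    apply intervalIntegral.integral_eq_sub_of_hasDerivAt
    · intro x hx
      have hx0 := hpos x hx
      have := ((Real.hasDerivAt_sqrt (ne_of_gt hx0)).const_mul c).neg
      convert this using 1
      field_simp
      · rfl
      · rw [mul_one_div]
    · apply ContinuousOn.intervalIntegrable
      apply ContinuousOn.neg
      apply ContinuousOn.div continuousOn_const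
      · exact (continuousOn_const.mul (Real.continuous_sqrt.continuousOn))
      · intro x hx
        have := hpos x hx
        positivity
  rw [key]
  ring
end
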